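/- arXiv:1901.02311 — 2 statements merged into one kernel-verified Lean document; each statement's English description precedes it below -/
import Mathlib

section
/- Let 0<p<∞, 0<q≤∞ and 0<η≤1. There is a constant C such that: if a martingale f=(f_n)∈ℳ admits a representation f_n = ∑_{k∈ℤ} λ_k 𝔼_n a^k (almost everywhere, for every n), where λ_k≥0 and each a^k is a (p,∞)^S-atom associated to a stopping time ν^k, then f∈𝒬_{p,q} and ‖f‖_{𝒬_{p,q}} ≤ C‖∑_{k∈ℤ}(λ_k/ℙ(B_{ν^k})^{1/p})^η 1_{B_{ν^k}}‖_{p/η,q/η}^{1/η}. -/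
open MeasureTheory Filter
open scoped ENNReal ENat

noncomputable section

variable {Ω : Type*} {m0 : MeasurableSpace Ω}

/-- The Wiener amalgam quasi-norm `‖g‖_{p,q}` of an `ℝ≥0∞`-valued function `g`, with respect to
the partition `(Os j)_{j ∈ ℤ}` of `Ω`: for finite `q` it is
`(∑ j (∫_{Os j} g^p dμ)^{q/p})^{1/q}`, and for `q = ∞` it is `sup_j (∫_{Os j} g^p dμ)^{1/p}`. -/
def amalgamNorm (μ : Measure Ω) (Os : ℤ → Set Ω) (p : ℝ) (q : ℝ≥0∞) (g : Ω → ℝ≥0∞) : ℝ≥0∞ :=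
  if q = ∞ then ⨆ j : ℤ, (∫⁻ ω in Os j, g ω ^ p ∂μ) ^ (1 / p)
  else (∑' j : ℤ, (∫⁻ ω in Os j, g ω ^ p ∂μ) ^ (q.toReal / p)) ^ (1 / q.toReal)

/-- The amalgam quasi-norm of a real-valued function. -/
def amalgamNormR (μ : Measure Ω) (Os : ℤ → Set Ω) (p : ℝ) (q : ℝ≥0∞) (f : Ω → ℝ) : ℝ≥0∞ :=
  amalgamNorm μ Os p q fun ω => ENNReal.ofReal |f ω|

/-- The `L_r` norm (`0 < r ≤ ∞`) of an `ℝ≥0∞`-valued function. -/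
def lrNorm (μ : Measure Ω) (r : ℝ≥0∞) (g : Ω → ℝ≥0∞) : ℝ≥0∞ :=
  if r = ∞ then essSup g μ else (∫⁻ ω, g ω ^ r.toReal ∂μ) ^ (1 / r.toReal)

/-- The conditional square function `s(f) = (∑_n 𝔼_{n-1}|d_n f|²)^{1/2}` of the
process `f = (f_n)` (differences `d_{n+1} f = f_{n+1} - f_n`). -/
def condSq (ℱ : Filtration ℕ m0) (μ : Measure Ω) (f : ℕ → Ω → ℝ) : Ω → ℝ≥0∞ :=
  fun ω => (∑' n : ℕ, ENNReal.ofReal ((μ[(fun x => (f (n + 1) x - f n x) ^ 2)|ℱ n]) ω)) ^ (2⁻¹ : ℝ)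

/-- The truncated conditional square function `s_n(f) = (∑_{i=1}^n 𝔼_{i-1}|d_i f|²)^{1/2}`. -/
def condSqFin (ℱ : Filtration ℕ m0) (μ : Measure Ω) (f : ℕ → Ω → ℝ) (n : ℕ) : Ω → ℝ≥0∞ :=
  fun ω =>
    (∑ i ∈ Finset.range n, ENNReal.ofReal ((μ[(fun x => (f (i + 1) x - f i x) ^ 2)|ℱ i]) ω)) ^
      (2⁻¹ : ℝ)

/-- The square function `S(f) = (∑_n |d_n f|²)^{1/2}`. -/
def sqFn (f : ℕ → Ω → ℝ) : Ω → ℝ≥0∞ :=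
  fun ω => (∑' n : ℕ, ENNReal.ofReal ((f (n + 1) ω - f n ω) ^ 2)) ^ (2⁻¹ : ℝ)

/-- The truncated square function `S_n(f) = (∑_{i=1}^n |d_i f|²)^{1/2}` (real-valued). -/
def sqFnFin (f : ℕ → Ω → ℝ) (n : ℕ) : Ω → ℝ :=
  fun ω => Real.sqrt (∑ i ∈ Finset.range n, (f (i + 1) ω - f i ω) ^ 2)

/-- The maximal function `f* = sup_n |f_n|`. -/
def maxFn (f : ℕ → Ω → ℝ) : Ω → ℝ≥0∞ := fun ω => ⨆ n : ℕ, ENNReal.ofReal |f n ω|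

/-- A stopping time with values in `ℕ ∪ {∞}` for the filtration `ℱ`. -/
def IsStoppingTimeE (ℱ : Filtration ℕ m0) (ν : Ω → ℕ∞) : Prop :=
  ∀ n : ℕ, MeasurableSet[ℱ n] {ω | ν ω ≤ (n : ℕ∞)}

/-- `B_ν = {ν ≠ ∞}`. -/
def Bset (ν : Ω → ℕ∞) : Set Ω := {ω | ν ω ≠ ⊤}

/-- The `H^s_{p,q}` quasi-norm `‖s(f)‖_{p,q}` of a process `f`. -/
def HsNorm (ℱ : Filtration ℕ m0) (μ : Measure Ω) (Os : ℤ → Set Ω) (p : ℝ) (q : ℝ≥0∞)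
    (f : ℕ → Ω → ℝ) : ℝ≥0∞ :=
  amalgamNorm μ Os p q (condSq ℱ μ f)

/-- Membership in the class `Γ` of adapted, nondecreasing, nonnegative sequences. -/
def MemGamma (ℱ : Filtration ℕ m0) (β : ℕ → Ω → ℝ) : Prop :=
  Adapted ℱ β ∧ (∀ ω, Monotone fun n => β n ω) ∧ ∀ (n : ℕ) (ω : Ω), 0 ≤ β n ω

/-- `β_∞ = lim_n β_n (= sup_n β_n)` for a nondecreasing nonnegative sequence `β`. -/
def betaInfty (β : ℕ → Ω → ℝ) : Ω → ℝ≥0∞ := fun ω => ⨆ n, ENNReal.ofReal (β n ω)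

/-- The `𝒬_{p,q}` quasi-norm: the infimum of `‖β_∞‖_{p,q}` over all `β ∈ Γ`
with `S_{n}(f) ≤ β_{n-1}`. -/
def QNorm (ℱ : Filtration ℕ m0) (μ : Measure Ω) (Os : ℤ → Set Ω) (p : ℝ) (q : ℝ≥0∞)
    (f : ℕ → Ω → ℝ) : ℝ≥0∞ :=
  ⨅ (β : ℕ → Ω → ℝ) (_ : MemGamma ℱ β ∧ ∀ n : ℕ, ∀ᵐ ω ∂μ, sqFnFin f (n + 1) ω ≤ β n ω),
    amalgamNorm μ Os p q (betaInfty β)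

/-- The `𝒫_{p,q}` quasi-norm: the infimum of `‖β_∞‖_{p,q}` over all `β ∈ Γ`
with `|f_n| ≤ β_{n-1}`. -/
def PNorm (ℱ : Filtration ℕ m0) (μ : Measure Ω) (Os : ℤ → Set Ω) (p : ℝ) (q : ℝ≥0∞)
    (f : ℕ → Ω → ℝ) : ℝ≥0∞ :=
  ⨅ (β : ℕ → Ω → ℝ) (_ : MemGamma ℱ β ∧ ∀ n : ℕ, ∀ᵐ ω ∂μ, |f (n + 1) ω| ≤ β n ω),
    amalgamNorm μ Os p q (betaInfty β)

/-- A `(p,r)^s`-atom `a` associated to the stopping time `ν`. -/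
structure IsAtomS (ℱ : Filtration ℕ m0) (μ : Measure Ω) (p : ℝ) (r : ℝ≥0∞)
    (a : Ω → ℝ) (ν : Ω → ℕ∞) : Prop where
  stopping : IsStoppingTimeE ℱ ν
  integrable : Integrable a μ
  vanish : ∀ n : ℕ, ∀ᵐ ω ∂μ, (n : ℕ∞) ≤ ν ω → (μ[a|ℱ n]) ω = 0
  size : lrNorm μ r (condSq ℱ μ fun n => μ[a|ℱ n]) ≤ μ (Bset ν) ^ (1 / r.toReal - 1 / p)

/-- A `(p,q,r)^s`-atom `a` associated to the stopping time `ν`. -/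
structure IsAtomS' (ℱ : Filtration ℕ m0) (μ : Measure Ω) (Os : ℤ → Set Ω) (p : ℝ) (q r : ℝ≥0∞)
    (a : Ω → ℝ) (ν : Ω → ℕ∞) : Prop where
  stopping : IsStoppingTimeE ℱ ν
  integrable : Integrable a μ
  vanish : ∀ n : ℕ, ∀ᵐ ω ∂μ, (n : ℕ∞) ≤ ν ω → (μ[a|ℱ n]) ω = 0
  size : lrNorm μ r (condSq ℱ μ fun n => μ[a|ℱ n]) ≤
    μ (Bset ν) ^ (1 / r.toReal) * (amalgamNorm μ Os p q ((Bset ν).indicator 1))⁻¹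

/-- A `(p,∞)^S`-atom `a` associated to the stopping time `ν`. -/
structure IsAtomBigS (ℱ : Filtration ℕ m0) (μ : Measure Ω) (p : ℝ)
    (a : Ω → ℝ) (ν : Ω → ℕ∞) : Prop where
  stopping : IsStoppingTimeE ℱ ν
  integrable : Integrable a μ
  vanish : ∀ n : ℕ, ∀ᵐ ω ∂μ, (n : ℕ∞) ≤ ν ω → (μ[a|ℱ n]) ω = 0
  size : essSup (sqFn fun n => μ[a|ℱ n]) μ ≤ μ (Bset ν) ^ (-(1 / p))

/-- A `(p,q,∞)^S`-atom `a` associated to the stopping time `ν`. -/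
structure IsAtomBigS' (ℱ : Filtration ℕ m0) (μ : Measure Ω) (Os : ℤ → Set Ω) (p : ℝ) (q : ℝ≥0∞)
    (a : Ω → ℝ) (ν : Ω → ℕ∞) : Prop where
  stopping : IsStoppingTimeE ℱ ν
  integrable : Integrable a μ
  vanish : ∀ n : ℕ, ∀ᵐ ω ∂μ, (n : ℕ∞) ≤ ν ω → (μ[a|ℱ n]) ω = 0
  size : essSup (sqFn fun n => μ[a|ℱ n]) μ ≤ (amalgamNorm μ Os p q ((Bset ν).indicator 1))⁻¹

/-- A `(p,∞)^*`-atom `a` associated to the stopping time `ν`. -/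
structure IsAtomStar (ℱ : Filtration ℕ m0) (μ : Measure Ω) (p : ℝ)
    (a : Ω → ℝ) (ν : Ω → ℕ∞) : Prop where
  stopping : IsStoppingTimeE ℱ ν
  integrable : Integrable a μ
  vanish : ∀ n : ℕ, ∀ᵐ ω ∂μ, (n : ℕ∞) ≤ ν ω → (μ[a|ℱ n]) ω = 0
  size : essSup (maxFn fun n => μ[a|ℱ n]) μ ≤ μ (Bset ν) ^ (-(1 / p))

/-- A `(p,q,∞)^*`-atom `a` associated to the stopping time `ν`. -/
structure IsAtomStar' (ℱ : Filtration ℕ m0) (μ : Measure Ω) (Os : ℤ → Set Ω) (p : ℝ) (q : ℝ≥0∞)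
    (a : Ω → ℝ) (ν : Ω → ℕ∞) : Prop where
  stopping : IsStoppingTimeE ℱ ν
  integrable : Integrable a μ
  vanish : ∀ n : ℕ, ∀ᵐ ω ∂μ, (n : ℕ∞) ≤ ν ω → (μ[a|ℱ n]) ω = 0
  size : essSup (maxFn fun n => μ[a|ℱ n]) μ ≤ (amalgamNorm μ Os p q ((Bset ν).indicator 1))⁻¹

/-- The stopped limit `f^ν`: equal to `𝔼_{ν(ω)} f (ω)` where `ν(ω) < ∞`, and to `f(ω)`
(the a.e. limit of the martingale `(𝔼_n f)`) where `ν(ω) = ∞`. -/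
def fStopped (ℱ : Filtration ℕ m0) (μ : Measure Ω) (f : Ω → ℝ) (ν : Ω → ℕ∞) : Ω → ℝ :=
  fun ω => if ν ω = ⊤ then f ω else (μ[f|ℱ (ν ω).toNat]) ω

/-- The Campanato norm `‖g‖_{ℒ_{2,φ}} = sup_ν φ(B_ν)⁻¹ (ℙ(B_ν)⁻¹ ∫_{B_ν} |g - g^ν|² dℙ)^{1/2}`,
where `φ(A) = ‖1_A‖_{p,q} / ℙ(A)` and the supremum runs over all stopping times `ν`
with `ℙ(B_ν) ≠ 0`. -/
def campanatoNorm (ℱ : Filtration ℕ m0) (μ : Measure Ω) (Os : ℤ → Set Ω) (p : ℝ) (q : ℝ≥0∞)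
    (g : Ω → ℝ) : ℝ≥0∞ :=
  ⨆ (ν : Ω → ℕ∞) (_ : IsStoppingTimeE ℱ ν ∧ μ (Bset ν) ≠ 0),
    (amalgamNorm μ Os p q ((Bset ν).indicator 1) / μ (Bset ν))⁻¹ *
      ((μ (Bset ν))⁻¹ *
        ∫⁻ ω in Bset ν, ENNReal.ofReal ((g ω - fStopped ℱ μ g ν ω) ^ 2) ∂μ) ^ (2⁻¹ : ℝ)

/-!
With `x_k = λ_k ℙ(B_{ν^k})^{-1/p}` the sequence `β_n = ∑_k x_k 1_{ν^k ≤ n}` is adapted (the `ν^k`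
are stopping times) and nondecreasing. Since `𝔼_i a^k = 0` for `i ≤ ν^k`, the increments of `a^k`
up to time `n + 1` vanish unless `ν^k ≤ n`, so Minkowski's inequality in `ℓ²` for the vectors of
increments gives `S_{n+1}(f) ≤ ∑_k λ_k S_{n+1}(a^k) ≤ β_n`. The series `∑_k λ_k 𝔼_n a^k` converges
absolutely wherever `∑_k x_k 1_{B_{ν^k}}` is finite, which holds a.e. when the right-hand side is
finite. Finally `β_∞ ≤ ∑_k x_k 1_{B_{ν^k}} ≤ (∑_k x_k^η 1_{B_{ν^k}})^{1/η}` as `η ≤ 1`, and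
`‖g^{1/η}‖_{p,q} = ‖g‖_{p/η,q/η}^{1/η}`, so `C = 1` works.
-/

namespace ENNReal

theorem rpow_tsum_le_tsum_rpow {ι : Type*} (y : ι → ℝ≥0∞) {η : ℝ} (hη0 : 0 < η) (hη1 : η ≤ 1) :
    (∑' k, y k) ^ η ≤ ∑' k, y k ^ η := by
  have hfin (s : Finset ι) : (∑ k ∈ s, y k) ^ η ≤ ∑ k ∈ s, y k ^ η := by
    classical
    induction s using Finset.induction_on with
    | empty => simp [ENNReal.zero_rpow_of_pos hη0]
    | insert k s hk ih =>
      rw [Finset.sum_insert hk, Finset.sum_insert hk]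
      exact (rpow_add_le_add_rpow _ _ hη0.le hη1).trans (by gcongr)
  rw [ENNReal.tsum_eq_iSup_sum, ← orderIsoRpow_apply η hη0, OrderIso.map_iSup]
  exact iSup_le fun s => (hfin s).trans (ENNReal.sum_le_tsum s)

theorem tsum_le_rpow_tsum_rpow {ι : Type*} (y : ι → ℝ≥0∞) {η : ℝ} (hη0 : 0 < η) (hη1 : η ≤ 1) :
    ∑' k, y k ≤ (∑' k, y k ^ η) ^ (1 / η) := by
  rw [one_div, ENNReal.le_rpow_inv_iff hη0]
  exact rpow_tsum_le_tsum_rpow y hη0 hη1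

end ENNReal

section Amalgam

variable (μ : Measure Ω) (Os : ℤ → Set Ω)

theorem amalgamNorm_mono {p : ℝ} (hp : 0 ≤ p) (q : ℝ≥0∞) {g₁ g₂ : Ω → ℝ≥0∞} (h : g₁ ≤ g₂) :
    amalgamNorm μ Os p q g₁ ≤ amalgamNorm μ Os p q g₂ := by
  have hint (j : ℤ) : ∫⁻ ω in Os j, g₁ ω ^ p ∂μ ≤ ∫⁻ ω in Os j, g₂ ω ^ p ∂μ :=
    lintegral_mono fun ω => ENNReal.rpow_le_rpow (h ω) hp
  unfold amalgamNorm
  split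
  · exact iSup_mono fun j => ENNReal.rpow_le_rpow (hint j) (by positivity)
  · exact ENNReal.rpow_le_rpow (ENNReal.tsum_le_tsum fun j =>
      ENNReal.rpow_le_rpow (hint j) (by positivity)) (by positivity)

theorem amalgamNorm_rpow_one_div (p : ℝ) (q : ℝ≥0∞) {η : ℝ} (hη : 0 < η) (g : Ω → ℝ≥0∞) :
    amalgamNorm μ Os p q (fun ω => g ω ^ (1 / η)) =
      amalgamNorm μ Os (p / η) (q / ENNReal.ofReal η) g ^ (1 / η) := by
  have hint (j : ℤ) : ∫⁻ ω in Os j, (g ω ^ (1 / η)) ^ p ∂μ = ∫⁻ ω in Os j, g ω ^ (p / η) ∂μ := by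
    simp_rw [← ENNReal.rpow_mul, one_div_mul_eq_div]
  have hη' : ENNReal.ofReal η ≠ 0 := by simpa using hη
  unfold amalgamNorm
  rcases eq_or_ne q ∞ with rfl | hq
  · rw [if_pos rfl, if_pos (ENNReal.top_div_of_ne_top ENNReal.ofReal_ne_top),
      ← ENNReal.orderIsoRpow_apply (1 / η) (by positivity), OrderIso.map_iSup]
    refine iSup_congr fun j => ?_
    rw [hint, ENNReal.orderIsoRpow_apply, ← ENNReal.rpow_mul]
    congr 1
    field_simp
  · have hq' : q / ENNReal.ofReal η ≠ ∞ := ENNReal.div_ne_top hq hη'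
    rw [if_neg hq, if_neg hq', ← ENNReal.rpow_mul, ENNReal.toReal_div,
      ENNReal.toReal_ofReal hη.le, div_div_div_cancel_right₀ hη.ne']
    simp_rw [hint]
    congr 1
    field_simp

theorem lintegral_rpow_ne_top_of_amalgamNorm_ne_top {p : ℝ} {q : ℝ≥0∞} (hp : 0 < p) (hq : q ≠ 0)
    {g : Ω → ℝ≥0∞} (h : amalgamNorm μ Os p q g ≠ ∞) (j : ℤ) :
    ∫⁻ ω in Os j, g ω ^ p ∂μ ≠ ∞ := by
  intro hj
  apply h
  unfold amalgamNorm
  split_ifs with hq'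
  · exact top_le_iff.mp (le_iSup_of_le j (by rw [hj, ENNReal.top_rpow_of_pos (by positivity)]))
  · have : 0 < q.toReal := ENNReal.toReal_pos hq hq'
    rw [ENNReal.tsum_eq_top_of_eq_top ⟨j, by rw [hj, ENNReal.top_rpow_of_pos (by positivity)]⟩,
      ENNReal.top_rpow_of_pos (by positivity)]

theorem ae_ne_top_of_amalgamNorm_ne_top (hOcov : ⋃ j, Os j = Set.univ) {p : ℝ} {q : ℝ≥0∞}
    (hp : 0 < p) (hq : q ≠ 0) {g : Ω → ℝ≥0∞} (hg : AEMeasurable g μ)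
    (h : amalgamNorm μ Os p q g ≠ ∞) : ∀ᵐ ω ∂μ, g ω ≠ ∞ := by
  rw [← Measure.restrict_univ (μ := μ), ← hOcov, ae_restrict_iUnion_iff]
  intro j
  filter_upwards [ae_lt_top' (hg.restrict.pow_const p)
    (lintegral_rpow_ne_top_of_amalgamNorm_ne_top μ Os hp hq h j)] with ω hω hinf
  rw [hinf, ENNReal.top_rpow_of_pos hp] at hω
  exact lt_irrefl _ hω

end Amalgam

section SquareFunction

def incrementVec (n : ℕ) (e : ℕ → ℝ) : EuclideanSpace ℝ (Fin n) :=
  WithLp.toLp 2 fun i => e (i + 1) - e i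

theorem sqFnFin_eq_norm_incrementVec (f : ℕ → Ω → ℝ) (n : ℕ) (ω : Ω) :
    sqFnFin f n ω = ‖incrementVec n (f · ω)‖ := by
  simp only [EuclideanSpace.norm_eq, sqFnFin, incrementVec, Real.norm_eq_abs, sq_abs]
  rw [Fin.sum_univ_eq_sum_range (fun i => (f (i + 1) ω - f i ω) ^ 2)]

theorem ofReal_sqFnFin_le_tsum (f : ℕ → Ω → ℝ) (c : ℤ → ℝ) (g : ℤ → ℕ → Ω → ℝ) (n : ℕ) (ω : Ω)
    (hsum : ∀ i ≤ n, Summable fun k => c k * g k i ω)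
    (hf : ∀ i ≤ n, f i ω = ∑' k, c k * g k i ω) :
    ENNReal.ofReal (sqFnFin f n ω) ≤
      ∑' k, ENNReal.ofReal |c k| * ENNReal.ofReal (sqFnFin (g k) n ω) := by
  have hvec : HasSum (fun k => c k • incrementVec n (g k · ω)) (incrementVec n (f · ω)) := by
    refine (PiLp.continuousLinearEquiv 2 ℝ fun _ : Fin n => ℝ).hasSum.mp
      (Pi.hasSum.mpr fun i => ?_)
    simp only [PiLp.continuousLinearEquiv_apply, incrementVec, WithLp.ofLp_smul, Pi.smul_apply,
      smul_eq_mul, mul_sub]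
    rw [hf _ i.isLt, hf _ i.isLt.le]
    exact (hsum _ i.isLt).hasSum.sub (hsum _ i.isLt.le).hasSum
  simp only [sqFnFin_eq_norm_incrementVec, ofReal_norm, ← Real.enorm_eq_ofReal_abs,
    ← enorm_smul, ← hvec.tsum_eq]
  exact enorm_tsum_le_tsum_enorm

variable (f : ℕ → Ω → ℝ) (ω : Ω)

theorem ofReal_sqFnFin_le_sqFn (n : ℕ) : ENNReal.ofReal (sqFnFin f n ω) ≤ sqFn f ω := by
  have hsum : 0 ≤ ∑ i ∈ Finset.range n, (f (i + 1) ω - f i ω) ^ 2 := by positivity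
  rw [sqFnFin, Real.sqrt_eq_rpow, ← inv_eq_one_div,
    ← ENNReal.ofReal_rpow_of_nonneg hsum (by norm_num),
    ENNReal.ofReal_sum_of_nonneg fun i _ => sq_nonneg _]
  exact ENNReal.rpow_le_rpow (ENNReal.sum_le_tsum _) (by norm_num)

theorem ofReal_abs_le_mul_sqFn (h0 : f 0 ω = 0) (n : ℕ) :
    ENNReal.ofReal |f n ω| ≤ n * sqFn f ω := by
  have hincr (i : ℕ) : ENNReal.ofReal |f (i + 1) ω - f i ω| ≤ sqFn f ω := by
    refine le_trans (ENNReal.ofReal_le_ofReal (Real.abs_le_sqrt ?_))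
      (ofReal_sqFnFin_le_sqFn f ω (i + 1))
    exact Finset.single_le_sum (f := fun j => (f (j + 1) ω - f j ω) ^ 2)
      (fun j _ => sq_nonneg _) (Finset.self_mem_range_succ i)
  calc ENNReal.ofReal |f n ω| = ENNReal.ofReal |∑ i ∈ Finset.range n, (f (i + 1) ω - f i ω)| := by
        rw [Finset.sum_range_sub (f · ω), h0, sub_zero]
    _ ≤ ∑ i ∈ Finset.range n, ENNReal.ofReal |f (i + 1) ω - f i ω| := by
        rw [← ENNReal.ofReal_sum_of_nonneg fun i _ => abs_nonneg _]
        exact ENNReal.ofReal_le_ofReal (Finset.abs_sum_le_sum_abs _ _)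
    _ ≤ n * sqFn f ω := by
        simpa using Finset.sum_le_card_nsmul (Finset.range n) _ _ fun i _ => hincr i

theorem sqFnFin_eq_zero {n : ℕ} (h : ∀ i ≤ n, f i ω = 0) : sqFnFin f n ω = 0 := by
  rw [sqFnFin, Finset.sum_eq_zero fun i hi => ?_, Real.sqrt_zero]
  rw [h i (Finset.mem_range.mp hi).le, h (i + 1) (Finset.mem_range.mp hi), sub_zero, sq, mul_zero]

theorem sqFn_eq_zero (h : ∀ i, f i ω = 0) : sqFn f ω = 0 := by
  simp [sqFn, h]

end SquareFunction

section Atoms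

variable {ℱ : Filtration ℕ m0} {μ : Measure Ω}

theorem Bset_eq_iUnion (ν : Ω → ℕ∞) : Bset ν = ⋃ n : ℕ, {ω | ν ω ≤ n} := by
  ext ω
  simp only [Bset, Set.mem_ofPred_eq, Set.mem_iUnion]
  exact ⟨fun h => ⟨(ν ω).toNat, (ENat.natCast_toNat h).ge⟩,
    fun ⟨n, hn⟩ => ne_top_of_le_ne_top (ENat.natCast_ne_top n) hn⟩

theorem IsStoppingTimeE.measurableSet_Bset {ν : Ω → ℕ∞} (hν : IsStoppingTimeE ℱ ν) :
    MeasurableSet (Bset ν) := by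
  rw [Bset_eq_iUnion]
  exact MeasurableSet.iUnion fun n => ℱ.le n _ (hν n)

variable {p : ℝ} {a : Ω → ℝ} {ν : Ω → ℕ∞}

theorem IsAtomBigS.ae_sqFn_le (ha : IsAtomBigS ℱ μ p a ν) :
    ∀ᵐ ω ∂μ, sqFn (fun n => μ[a|ℱ n]) ω ≤
      (Bset ν).indicator (fun _ => (μ (Bset ν) ^ (1 / p))⁻¹) ω := by
  filter_upwards [ENNReal.ae_le_essSup (sqFn fun n => μ[a|ℱ n]),
    ae_all_iff.mpr ha.vanish] with ω hS hvan
  by_cases hω : ω ∈ Bset ν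
  · rw [Set.indicator_of_mem hω]
    exact hS.trans (ha.size.trans_eq (ENNReal.rpow_neg _ _))
  · have hν : ν ω = ⊤ := not_not.mp hω
    rw [sqFn_eq_zero _ ω fun n => hvan n (hν ▸ le_top)]
    exact zero_le

theorem IsAtomBigS.ae_ofReal_sqFnFin_le (ha : IsAtomBigS ℱ μ p a ν) :
    ∀ᵐ ω ∂μ, ∀ n : ℕ, ENNReal.ofReal (sqFnFin (fun n => μ[a|ℱ n]) (n + 1) ω) ≤
      {ω | ν ω ≤ n}.indicator (fun _ => (μ (Bset ν) ^ (1 / p))⁻¹) ω := by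
  filter_upwards [ha.ae_sqFn_le, ae_all_iff.mpr ha.vanish] with ω hS hvan n
  by_cases hn : ν ω ≤ n
  · have hB : ω ∈ Bset ν := ne_top_of_le_ne_top (ENat.natCast_ne_top n) hn
    rw [Set.indicator_of_mem (show ω ∈ {ω | ν ω ≤ n} from hn)]
    rw [Set.indicator_of_mem hB] at hS
    exact (ofReal_sqFnFin_le_sqFn _ ω _).trans hS
  · have hsucc : ((n + 1 : ℕ) : ℕ∞) ≤ ν ω := by
      simpa using Order.add_one_le_of_lt (not_le.mp hn)
    rw [sqFnFin_eq_zero _ ω fun i hi => hvan i ((Nat.cast_le.mpr hi).trans hsucc)]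
    simp

end Atoms

section Dominating

-- `toReal` sends `∞` to `0`, so `n ↦ (B n ω).toReal` need not be monotone; the running maximum is.
def runningMaxToReal (B : ℕ → Ω → ℝ≥0∞) : ℕ → Ω → ℝ
  | 0 => fun ω => (B 0 ω).toReal
  | n + 1 => fun ω => max (runningMaxToReal B n ω) (B (n + 1) ω).toReal

variable (B : ℕ → Ω → ℝ≥0∞)

theorem toReal_le_runningMaxToReal (n : ℕ) (ω : Ω) : (B n ω).toReal ≤ runningMaxToReal B n ω := by
  cases n with
  | zero => exact le_rfl
  | succ n => exact le_max_right _ _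

theorem measurable_runningMaxToReal {ℱ : Filtration ℕ m0} (hB : ∀ n, Measurable[ℱ n] (B n))
    (n : ℕ) : Measurable[ℱ n] (runningMaxToReal B n) := by
  induction n with
  | zero => exact (hB 0).ennreal_toReal
  | succ n ih => exact (ih.mono (ℱ.mono n.le_succ) le_rfl).max (hB (n + 1)).ennreal_toReal

theorem memGamma_runningMaxToReal {ℱ : Filtration ℕ m0} (hB : ∀ n, Measurable[ℱ n] (B n)) :
    MemGamma ℱ (runningMaxToReal B) :=
  ⟨measurable_runningMaxToReal B hB,
    fun _ => monotone_nat_of_le_succ fun _ => le_max_left _ _,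
    fun n ω => ENNReal.toReal_nonneg.trans (toReal_le_runningMaxToReal B n ω)⟩

theorem ofReal_runningMaxToReal_le (hB : ∀ ω, Monotone (B · ω)) (n : ℕ) (ω : Ω) :
    ENNReal.ofReal (runningMaxToReal B n ω) ≤ B n ω := by
  induction n with
  | zero => exact ENNReal.ofReal_toReal_le
  | succ n ih =>
    rw [runningMaxToReal, ENNReal.ofReal_max]
    exact max_le (ih.trans (hB ω n.le_succ)) ENNReal.ofReal_toReal_le

theorem QNorm_le_amalgamNorm_iSup (ℱ : Filtration ℕ m0) (μ : Measure Ω) (Os : ℤ → Set Ω)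
    {p : ℝ} (hp : 0 ≤ p) (q : ℝ≥0∞) {f : ℕ → Ω → ℝ} (hBm : ∀ n, Measurable[ℱ n] (B n))
    (hBmono : ∀ ω, Monotone (B · ω)) (hS : ∀ n, ∀ᵐ ω ∂μ, sqFnFin f (n + 1) ω ≤ (B n ω).toReal) :
    QNorm ℱ μ Os p q f ≤ amalgamNorm μ Os p q fun ω => ⨆ n, B n ω :=
  (iInf₂_le (runningMaxToReal B) ⟨memGamma_runningMaxToReal B hBm,
    fun n => (hS n).mono fun ω h => h.trans (toReal_le_runningMaxToReal B n ω)⟩).trans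
  (amalgamNorm_mono μ Os hp q fun ω =>
    iSup_mono fun n => ofReal_runningMaxToReal_le B hBmono n ω)

end Dominating

section AtomicDecomposition

variable (ν : ℤ → Ω → ℕ∞) (x : ℤ → ℝ≥0∞)

def stoppedWeightSum (n : ℕ) (ω : Ω) : ℝ≥0∞ :=
  ∑' k, {ω | ν k ω ≤ n}.indicator (fun _ => x k) ω

theorem measurable_stoppedWeightSum {ℱ : Filtration ℕ m0} (hν : ∀ k, IsStoppingTimeE ℱ (ν k))
    (n : ℕ) : Measurable[ℱ n] (stoppedWeightSum ν x n) :=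
  letI := ℱ n
  Measurable.tsum fun k => measurable_const.indicator (hν k n)

theorem monotone_stoppedWeightSum (ω : Ω) : Monotone (stoppedWeightSum ν x · ω) := by
  refine fun m n hmn => ENNReal.tsum_le_tsum fun k => ?_
  refine Set.indicator_le_indicator_of_subset (fun ω' (h : ν k ω' ≤ m) => ?_) (fun _ => zero_le) ω
  exact h.trans (Nat.cast_le.mpr hmn)

theorem stoppedWeightSum_le (n : ℕ) (ω : Ω) :
    stoppedWeightSum ν x n ω ≤ ∑' k, (Bset (ν k)).indicator (fun _ => x k) ω :=
  ENNReal.tsum_le_tsum fun _ => Set.indicator_le_indicator_of_subset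
    (fun _ h => ne_top_of_le_ne_top (ENat.natCast_ne_top n) h) (fun _ => zero_le) ω

def atomWeight (μ : Measure Ω) (p : ℝ) (l : ℤ → ℝ) (k : ℤ) : ℝ≥0∞ :=
  ENNReal.ofReal (l k) / μ (Bset (ν k)) ^ (1 / p)

variable {ℱ : Filtration ℕ m0} {μ : Measure Ω} {p : ℝ} {f : ℕ → Ω → ℝ} {l : ℤ → ℝ}
  {a : ℤ → Ω → ℝ}

theorem ae_sqFnFin_le_stoppedWeightSum (hl : ∀ k, 0 ≤ l k)
    (ha : ∀ k, IsAtomBigS ℱ μ p (a k) (ν k))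
    (hrep : ∀ n : ℕ, ∀ᵐ ω ∂μ, f n ω = ∑' k, l k * (μ[a k|ℱ n]) ω)
    (hfin : ∀ᵐ ω ∂μ, ∑' k, (Bset (ν k)).indicator (fun _ => atomWeight ν μ p l k) ω ≠ ∞)
    (n : ℕ) :
    ∀ᵐ ω ∂μ, sqFnFin f (n + 1) ω ≤ (stoppedWeightSum ν (atomWeight ν μ p l) n ω).toReal := by
  filter_upwards [ae_all_iff.mpr hrep, ae_all_iff.mpr fun k => (ha k).ae_sqFn_le,
    ae_all_iff.mpr fun k => (ha k).ae_ofReal_sqFnFin_le,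
    ae_all_iff.mpr fun k => ae_all_iff.mpr (ha k).vanish, hfin] with ω hrepω hS hSn hvan hfinω
  have hsum (i : ℕ) : Summable fun k => l k * (μ[a k|ℱ i]) ω := by
    refine .of_norm (tsum_enorm_ne_top_iff_summable_norm.mp (ne_top_of_le_ne_top
      (ENNReal.mul_ne_top (ENNReal.natCast_ne_top i) hfinω) ?_))
    rw [← ENNReal.tsum_mul_left]
    refine ENNReal.tsum_le_tsum fun k => ?_
    rw [Real.enorm_eq_ofReal_abs, abs_mul, ENNReal.ofReal_mul (abs_nonneg _), abs_of_nonneg (hl k)]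
    calc ENNReal.ofReal (l k) * ENNReal.ofReal |(μ[a k|ℱ i]) ω|
        ≤ ENNReal.ofReal (l k) * (i * sqFn (fun n => μ[a k|ℱ n]) ω) := by
          gcongr
          exact ofReal_abs_le_mul_sqFn _ ω (hvan k 0 zero_le) i
      _ ≤ ENNReal.ofReal (l k) *
            (i * (Bset (ν k)).indicator (fun _ => (μ (Bset (ν k)) ^ (1 / p))⁻¹) ω) := by
          gcongr
          exact hS k
      _ = i * (Bset (ν k)).indicator (fun _ => atomWeight ν μ p l k) ω := by
          rw [mul_left_comm, ← Set.indicator_const_mul]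
          rfl
  have hle :
      ENNReal.ofReal (sqFnFin f (n + 1) ω) ≤ stoppedWeightSum ν (atomWeight ν μ p l) n ω := by
    refine (ofReal_sqFnFin_le_tsum f l (fun k n => μ[a k|ℱ n]) (n + 1) ω
      (fun i _ => hsum i) (fun i _ => hrepω i)).trans (ENNReal.tsum_le_tsum fun k => ?_)
    rw [abs_of_nonneg (hl k), atomWeight, div_eq_mul_inv, Set.indicator_const_mul]
    gcongr
    exact hSn k n
  exact (ENNReal.ofReal_le_iff_le_toReal
    (ne_top_of_le_ne_top hfinω (stoppedWeightSum_le ν _ n ω))).mp hle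

theorem tsum_indicator_le_rpow_tsum_indicator_rpow {ι : Type*} (s : ι → Set Ω) (y : ι → ℝ≥0∞)
    {η : ℝ} (hη0 : 0 < η) (hη1 : η ≤ 1) (ω : Ω) :
    ∑' k, (s k).indicator (fun _ => y k) ω ≤
      (∑' k, (s k).indicator (fun _ => y k ^ η) ω) ^ (1 / η) := by
  refine (ENNReal.tsum_le_rpow_tsum_rpow _ hη0 hη1).trans_eq ?_
  congr 2 with k
  by_cases h : ω ∈ s k <;> simp [h, ENNReal.zero_rpow_of_pos hη0]

theorem QNorm_le_amalgamNorm_of_eq_tsum_atoms (Os : ℤ → Set Ω) (hOcov : ⋃ j, Os j = Set.univ)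
    (hp : 0 < p) {q : ℝ≥0∞} (hq : 0 < q) {η : ℝ} (hη0 : 0 < η) (hη1 : η ≤ 1)
    (hl : ∀ k, 0 ≤ l k) (ha : ∀ k, IsAtomBigS ℱ μ p (a k) (ν k))
    (hrep : ∀ n : ℕ, ∀ᵐ ω ∂μ, f n ω = ∑' k, l k * (μ[a k|ℱ n]) ω) :
    QNorm ℱ μ Os p q f ≤ amalgamNorm μ Os (p / η) (q / ENNReal.ofReal η)
      (fun ω => ∑' k, (Bset (ν k)).indicator (fun _ => atomWeight ν μ p l k ^ η) ω) ^ (1 / η) := by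
  set g : Ω → ℝ≥0∞ := fun ω => ∑' k, (Bset (ν k)).indicator (fun _ => atomWeight ν μ p l k ^ η) ω
  rcases eq_or_ne (amalgamNorm μ Os (p / η) (q / ENNReal.ofReal η) g) ∞ with hG | hG
  · rw [hG, ENNReal.top_rpow_of_pos (by positivity)]
    exact le_top
  have hg : Measurable g :=
    Measurable.tsum fun k => measurable_const.indicator (ha k).stopping.measurableSet_Bset
  have hweight (ω : Ω) := tsum_indicator_le_rpow_tsum_indicator_rpow (fun k => Bset (ν k))
    (atomWeight ν μ p l) hη0 hη1 ω
  have hfin : ∀ᵐ ω ∂μ, ∑' k, (Bset (ν k)).indicator (fun _ => atomWeight ν μ p l k) ω ≠ ∞ :=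
    (ae_ne_top_of_amalgamNorm_ne_top μ Os hOcov (by positivity)
      (ENNReal.div_pos hq.ne' ENNReal.ofReal_ne_top).ne' hg.aemeasurable hG).mono fun ω h =>
        ne_top_of_le_ne_top (ENNReal.rpow_ne_top_of_nonneg (by positivity) h) (hweight ω)
  calc QNorm ℱ μ Os p q f
      ≤ amalgamNorm μ Os p q fun ω => ⨆ n, stoppedWeightSum ν (atomWeight ν μ p l) n ω :=
        QNorm_le_amalgamNorm_iSup _ ℱ μ Os hp.le q
          (measurable_stoppedWeightSum ν _ fun k => (ha k).stopping)
          (monotone_stoppedWeightSum ν _) (ae_sqFnFin_le_stoppedWeightSum ν hl ha hrep hfin)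
    _ ≤ amalgamNorm μ Os p q fun ω => g ω ^ (1 / η) :=
        amalgamNorm_mono μ Os hp.le q fun ω =>
          (iSup_le fun n => stoppedWeightSum_le ν _ n ω).trans (hweight ω)
    _ = amalgamNorm μ Os (p / η) (q / ENNReal.ofReal η) g ^ (1 / η) :=
        amalgamNorm_rpow_one_div μ Os p q hη0 g

end AtomicDecomposition

theorem stmt5_general
    (μ : Measure Ω) (ℱ : Filtration ℕ m0)
    (Os : ℤ → Set Ω) (hOcov : (⋃ j, Os j) = Set.univ)
    (p : ℝ) (q : ℝ≥0∞) (hp : 0 < p) (hq : 0 < q) (η : ℝ) (hη0 : 0 < η) (hη1 : η ≤ 1) :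
    ∃ C : ℝ≥0∞, C ≠ ∞ ∧
      ∀ (f : ℕ → Ω → ℝ) (l : ℤ → ℝ) (a : ℤ → Ω → ℝ) (ν : ℤ → Ω → ℕ∞),
        Martingale f ℱ μ → f 0 = 0 → (∀ k, 0 ≤ l k) →
        (∀ k, IsAtomBigS ℱ μ p (a k) (ν k)) →
        (∀ n : ℕ, ∀ᵐ ω ∂μ, f n ω = ∑' k : ℤ, l k * (μ[a k|ℱ n]) ω) →
        (amalgamNorm μ Os (p / η) (q / ENNReal.ofReal η)
            (fun ω => ∑' k : ℤ, (Bset (ν k)).indicator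
              (fun _ => (ENNReal.ofReal (l k) / μ (Bset (ν k)) ^ (1 / p)) ^ η) ω) < ∞ → QNorm ℱ μ Os p q f < ∞) ∧
        QNorm ℱ μ Os p q f ≤
          C * (amalgamNorm μ Os (p / η) (q / ENNReal.ofReal η)
            (fun ω => ∑' k : ℤ, (Bset (ν k)).indicator
              (fun _ => (ENNReal.ofReal (l k) / μ (Bset (ν k)) ^ (1 / p)) ^ η) ω)) ^ (1 / η) := by
  refine ⟨1, ENNReal.one_ne_top, fun f l a ν _ _ hl ha hrep => ?_⟩
  have hQ := QNorm_le_amalgamNorm_of_eq_tsum_atoms ν Os hOcov hp hq hη0 hη1 hl ha hrep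
  rw [one_mul]
  exact ⟨fun hG => hQ.trans_lt (ENNReal.rpow_lt_top_of_nonneg (by positivity) hG.ne), hQ⟩

theorem stmt5
    (μ : Measure Ω) [IsProbabilityMeasure μ] (ℱ : Filtration ℕ m0)
    (hsup : (⨆ n, (ℱ n : MeasurableSpace Ω)) = m0)
    (Os : ℤ → Set Ω) (hOmeas : ∀ j, MeasurableSet (Os j)) (hOne : ∀ j, (Os j).Nonempty)
    (hOdisj : Pairwise fun i j => Disjoint (Os i) (Os j)) (hOcov : (⋃ j, Os j) = Set.univ)
    (p : ℝ) (q : ℝ≥0∞) (hp : 0 < p) (hq : 0 < q) (η : ℝ) (hη0 : 0 < η) (hη1 : η ≤ 1) :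
    ∃ C : ℝ≥0∞, C ≠ ∞ ∧
      ∀ (f : ℕ → Ω → ℝ) (l : ℤ → ℝ) (a : ℤ → Ω → ℝ) (ν : ℤ → Ω → ℕ∞),
        Martingale f ℱ μ → f 0 = 0 → (∀ k, 0 ≤ l k) →
        (∀ k, IsAtomBigS ℱ μ p (a k) (ν k)) →
        (∀ n : ℕ, ∀ᵐ ω ∂μ, f n ω = ∑' k : ℤ, l k * (μ[a k|ℱ n]) ω) →
        (amalgamNorm μ Os (p / η) (q / ENNReal.ofReal η)
            (fun ω => ∑' k : ℤ, (Bset (ν k)).indicator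
              (fun _ => (ENNReal.ofReal (l k) / μ (Bset (ν k)) ^ (1 / p)) ^ η) ω) < ∞ → QNorm ℱ μ Os p q f < ∞) ∧
        QNorm ℱ μ Os p q f ≤
          C * (amalgamNorm μ Os (p / η) (q / ENNReal.ofReal η)
            (fun ω => ∑' k : ℤ, (Bset (ν k)).indicator
              (fun _ => (ENNReal.ofReal (l k) / μ (Bset (ν k)) ^ (1 / p)) ^ η) ω)) ^ (1 / η) :=
  stmt5_general μ ℱ Os hOcov p q hp hq η hη0 hη1
end
end

section
/- Let 0<p<1 and 0<q≤1. For every finite sequence {f_n}_{n=−m}^{m} of elements of L_{p,q}(Ω), the reverse Minkowski inequality holds in the amalgam quasi-norm: ∑_{n=−m}^{m}‖f_n‖_{p,q} ≤ ‖∑_{n=−m}^{m}|f_n|‖_{p,q}. -/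
open MeasureTheory Filter
open scoped ENNReal ENat

noncomputable section

variable {Ω : Type*} {m0 : MeasurableSpace Ω}

/-! Both layers of the amalgam quasi-norm are `L^r` quasi-norms with `r ≤ 1`: `L^p` of `μ`
restricted to `Os j` inside, and `ℓ^q(ℤ)`, i.e. `L^q` of the counting measure, outside. For
`r ≤ 1` Minkowski's inequality reverses. Writing `N i` for the `L^r` norm of `g i`, Hölder's
inequality with exponents `1/(1-r)` and `1/r` gives pointwise
`∑ N i ^ (1-r) * g i ^ r ≤ (∑ N i) ^ (1-r) * (∑ g i) ^ r`; integrating yields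
`∑ N i ≤ (∑ N i) ^ (1-r) * ∫ (∑ g i) ^ r`, which is the reverse inequality after cancelling. -/

theorem MeasureTheory.sum_lintegral_le_lintegral_sum {α ι : Type*} [MeasurableSpace α]
    (μ : Measure α) (s : Finset ι) (f : ι → α → ℝ≥0∞) :
    ∑ i ∈ s, ∫⁻ a, f i a ∂μ ≤ ∫⁻ a, ∑ i ∈ s, f i a ∂μ := by
  classical
  induction s using Finset.induction_on with
  | empty => simp
  | insert i s hi ih =>
    simp only [Finset.sum_insert hi]
    exact (add_le_add le_rfl ih).trans (le_lintegral_add _ _)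

theorem ENNReal.sum_rpow_mul_rpow_le {ι : Type*} {p : ℝ} (hp0 : 0 < p) (hp1 : p ≤ 1)
    (s : Finset ι) (a x : ι → ℝ≥0∞) :
    ∑ i ∈ s, a i ^ (1 - p) * x i ^ p ≤ (∑ i ∈ s, a i) ^ (1 - p) * (∑ i ∈ s, x i) ^ p := by
  rcases hp1.eq_or_lt with rfl | hp1
  · simp
  have hpq := Real.HolderConjugate.one_sub_inv_inv hp0 hp1
  have h := ENNReal.inner_le_Lp_mul_Lq s (fun i => a i ^ (1 - p)) (fun i => x i ^ p) hpq
  simpa [← ENNReal.rpow_mul, (sub_pos.2 hp1).ne', hp0.ne'] using h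

theorem ENNReal.sum_lintegral_Lp_le_lintegral_Lp_sum {α ι : Type*} [MeasurableSpace α]
    (μ : Measure α) {p : ℝ} (hp0 : 0 < p) (hp1 : p ≤ 1) (s : Finset ι) (g : ι → α → ℝ≥0∞) :
    ∑ i ∈ s, (∫⁻ a, g i a ^ p ∂μ) ^ (1 / p) ≤ (∫⁻ a, (∑ i ∈ s, g i a) ^ p ∂μ) ^ (1 / p) := by
  set N : ι → ℝ≥0∞ := fun i => (∫⁻ a, g i a ^ p ∂μ) ^ (1 / p)
  set S := ∑ i ∈ s, N i
  set X := ∫⁻ a, (∑ i ∈ s, g i a) ^ p ∂μ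
  have hN : ∀ i, N i ^ p = ∫⁻ a, g i a ^ p ∂μ := fun i => by
    simp only [N, one_div, ENNReal.rpow_inv_rpow hp0.ne']
  rw [one_div, ENNReal.le_rpow_inv_iff hp0]
  rcases eq_or_ne S 0 with hS0 | hS0
  · simp [hS0, ENNReal.zero_rpow_of_pos hp0]
  rcases eq_or_ne S ∞ with hS_top | hS_top
  · obtain ⟨i, hi, hNi⟩ := ENNReal.sum_eq_top.1 hS_top
    have hgi : ∫⁻ a, g i a ^ p ∂μ ≤ X := lintegral_mono fun a =>
      ENNReal.rpow_le_rpow (Finset.single_le_sum (f := (g · a)) (fun _ _ => zero_le) hi) hp0.le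
    rw [← hN, hNi, ENNReal.top_rpow_of_pos hp0, top_le_iff] at hgi
    simp [hgi]
  have key : S ^ (1 - p) * S ^ p ≤ S ^ (1 - p) * X := calc
    S ^ (1 - p) * S ^ p = ∑ i ∈ s, N i ^ (1 - p) * N i ^ p := by
      simp_rw [← ENNReal.rpow_add_of_nonneg _ _ (sub_nonneg.2 hp1) hp0.le, sub_add_cancel,
        ENNReal.rpow_one]
      rfl
    _ ≤ ∑ i ∈ s, ∫⁻ a, N i ^ (1 - p) * g i a ^ p ∂μ :=
      Finset.sum_le_sum fun i _ => (hN i).symm ▸ lintegral_const_mul_le _ _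
    _ ≤ ∫⁻ a, ∑ i ∈ s, N i ^ (1 - p) * g i a ^ p ∂μ := sum_lintegral_le_lintegral_sum μ s _
    _ ≤ ∫⁻ a, S ^ (1 - p) * (∑ i ∈ s, g i a) ^ p ∂μ :=
      lintegral_mono fun a => ENNReal.sum_rpow_mul_rpow_le hp0 hp1 s N (g · a)
    _ = S ^ (1 - p) * X := lintegral_const_mul' _ _ (ENNReal.rpow_ne_top_of_nonneg
      (sub_nonneg.2 hp1) hS_top)
  exact (ENNReal.mul_le_mul_iff_right (ENNReal.rpow_pos (pos_iff_ne_zero.2 hS0) hS_top).ne'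
    (ENNReal.rpow_ne_top_of_nonneg (sub_nonneg.2 hp1) hS_top)).1 key

theorem sum_amalgamNorm_le_amalgamNorm_sum (μ : Measure Ω) (Os : ℤ → Set Ω) {p : ℝ} {q : ℝ≥0∞}
    (hp0 : 0 < p) (hp1 : p ≤ 1) (hq0 : 0 < q) (hq1 : q ≤ 1) {ι : Type*} (s : Finset ι)
    (g : ι → Ω → ℝ≥0∞) :
    ∑ i ∈ s, amalgamNorm μ Os p q (g i) ≤ amalgamNorm μ Os p q fun ω => ∑ i ∈ s, g i ω := by
  have hq_top : q ≠ ∞ := ne_top_of_le_ne_top ENNReal.one_ne_top hq1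
  have hr0 : 0 < q.toReal := ENNReal.toReal_pos hq0.ne' hq_top
  have hr1 : q.toReal ≤ 1 := ENNReal.toReal_le_of_le_ofReal zero_le_one (by simpa using hq1)
  have hsplit : ∀ x : ℝ≥0∞, x ^ (q.toReal / p) = (x ^ (1 / p)) ^ q.toReal := fun x => by
    rw [← ENNReal.rpow_mul, one_div_mul_eq_div]
  simp only [amalgamNorm, if_neg hq_top, hsplit]
  calc ∑ i ∈ s, (∑' j, ((∫⁻ ω in Os j, g i ω ^ p ∂μ) ^ (1 / p)) ^ q.toReal) ^ (1 / q.toReal)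
      ≤ (∑' j, (∑ i ∈ s, (∫⁻ ω in Os j, g i ω ^ p ∂μ) ^ (1 / p)) ^ q.toReal) ^ (1 / q.toReal) := by
        simpa only [lintegral_count] using ENNReal.sum_lintegral_Lp_le_lintegral_Lp_sum
          Measure.count hr0 hr1 s fun i j => (∫⁻ ω in Os j, g i ω ^ p ∂μ) ^ (1 / p)
    _ ≤ _ := by
        gcongr with j
        exact ENNReal.sum_lintegral_Lp_le_lintegral_Lp_sum _ hp0 hp1 s g

theorem stmt14_general
    (μ : Measure Ω)
    (Os : ℤ → Set Ω)
    (p q : ℝ) (hp0 : 0 < p) (hp1 : p < 1) (hq0 : 0 < q) (hq1 : q ≤ 1)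
    (m : ℕ) (f : ℤ → Ω → ℝ) :
    ∑ n ∈ Finset.Icc (-(m : ℤ)) (m : ℤ), amalgamNormR μ Os p (ENNReal.ofReal q) (f n) ≤
      amalgamNormR μ Os p (ENNReal.ofReal q)
        fun ω => ∑ n ∈ Finset.Icc (-(m : ℤ)) (m : ℤ), |f n ω| := by
  have hsum : ∀ ω, ENNReal.ofReal (abs (∑ n ∈ Finset.Icc (-(m : ℤ)) m, |f n ω|)) =
      ∑ n ∈ Finset.Icc (-(m : ℤ)) m, ENNReal.ofReal |f n ω| := fun ω => by
    rw [abs_of_nonneg (Finset.sum_nonneg fun n _ => abs_nonneg _),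
      ENNReal.ofReal_sum_of_nonneg fun n _ => abs_nonneg _]
  simp only [amalgamNormR, hsum]
  exact sum_amalgamNorm_le_amalgamNorm_sum μ Os hp0 hp1.le (ENNReal.ofReal_pos.2 hq0)
    (ENNReal.ofReal_le_one.2 hq1) _ _

theorem stmt14
    (μ : Measure Ω) [IsProbabilityMeasure μ]
    (Os : ℤ → Set Ω) (hOmeas : ∀ j, MeasurableSet (Os j)) (hOne : ∀ j, (Os j).Nonempty)
    (hOdisj : Pairwise fun i j => Disjoint (Os i) (Os j)) (hOcov : (⋃ j, Os j) = Set.univ)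
    (p q : ℝ) (hp0 : 0 < p) (hp1 : p < 1) (hq0 : 0 < q) (hq1 : q ≤ 1)
    (m : ℕ) (f : ℤ → Ω → ℝ) (hmeas : ∀ n, Measurable (f n))
    (hmem : ∀ n, amalgamNormR μ Os p (ENNReal.ofReal q) (f n) < ∞) :
    ∑ n ∈ Finset.Icc (-(m : ℤ)) (m : ℤ), amalgamNormR μ Os p (ENNReal.ofReal q) (f n) ≤
      amalgamNormR μ Os p (ENNReal.ofReal q)
        fun ω => ∑ n ∈ Finset.Icc (-(m : ℤ)) (m : ℤ), |f n ω| :=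
  stmt14_general μ Os p q hp0 hp1 hq0 hq1 m f

end
end
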